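/- Let τ > 0, let p, q be reals with q > 0 and p > max(q, 1), and let φ : [−τ, 0] → ℝ be continuous with φ(0) ≥ 1, φ(0) ≥ |φ(t)|^{q/p} for all t ∈ [−τ, 0], and φ(0) > |φ(−τ)|^{q/p}. Then any solution y of the delay differential equation y′(t) = |y(t)|^p − |y(t−τ)|^q for t > 0, with y(t) = φ(t) on [−τ, 0], blows up in finite time: the maximal interval of existence [0, T*) has T* < ∞ and y(t) → +∞ as t → T*⁻. -/

import Mathlib

open Set Filter

/-- `y` is a solution on `[0, b)` of the delay equation
`y′(t) = |y(t)|^p − |y(t−τ)|^q` with history `φ` on `[−τ, 0]`: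
`y` is continuous on `[−τ, b)`, agrees with `φ` on `[−τ, 0]`, and is
differentiable on `(0, b)` with the prescribed derivative. -/
def DelaySolOn (τ p q : ℝ) (φ y : ℝ → ℝ) (b : ℝ) : Prop :=
  ContinuousOn y (Set.Ico (-τ) b) ∧
  (∀ t ∈ Set.Icc (-τ) (0:ℝ), y t = φ t) ∧
  ∀ t ∈ Set.Ioo (0:ℝ) b, HasDerivAt y (|y t| ^ p - |y (t - τ)| ^ q) t

/-- `y` is a global solution (on `[0, ∞)`) of the delay equation with history `φ`. -/
def DelaySolGlobal (τ p q : ℝ) (φ y : ℝ → ℝ) : Prop :=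
  ContinuousOn y (Set.Ici (-τ)) ∧
  (∀ t ∈ Set.Icc (-τ) (0:ℝ), y t = φ t) ∧
  ∀ t ∈ Set.Ioi (0:ℝ), HasDerivAt y (|y t| ^ p - |y (t - τ)| ^ q) t

/-!
As long as the forcing `|y t| ^ p - |y (t - τ)| ^ q` stays positive, `y` increases from
`φ 0 ≥ 1`. Then the delayed value never exceeds the current one (for `t ≤ τ` by the hypothesis
on `φ`, for `t > τ` by monotonicity), and since `q < p` and `y ≥ 1` this keeps the forcing
positive: every solution is strictly increasing. A solution bounded below the end `T` of its
interval has a limit at `T`, and Picard–Lindelöf continues it past `T`; so at a maximal `T` it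
tends to `+∞`. A global solution is impossible: once `y (t - τ) ≥ y τ = c > 1`, the forcing is at
least `(1 - c ^ (q - p)) y ^ p`, and comparison with `x' = ε x ^ p` drives `y ^ (1 - p)` to `0`
in finite time.
-/

open Topology Metric

theorem Real.rpow_div_rpow_self {x : ℝ} (hx : 0 ≤ x) {p : ℝ} (hp : p ≠ 0) (q : ℝ) :
    (x ^ (q / p)) ^ p = x ^ q := by
  rw [← Real.rpow_mul hx, div_mul_cancel₀ q hp]

theorem mul_rpow_le_rpow_sub_rpow {c u v p q : ℝ} (hc : 0 < c) (hcu : c ≤ u) (huv : u ≤ v)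
    (hq : 0 ≤ q) (hqp : q ≤ p) :
    (1 - c ^ (q - p)) * v ^ p ≤ v ^ p - u ^ q := by
  have hv : 0 < v := hc.trans_le (hcu.trans huv)
  have : u ^ q ≤ v ^ p * c ^ (q - p) :=
    calc u ^ q ≤ v ^ q := Real.rpow_le_rpow (hc.le.trans hcu) huv hq
      _ = v ^ p * v ^ (q - p) := by rw [← Real.rpow_add hv, add_sub_cancel]
      _ ≤ v ^ p * c ^ (q - p) := mul_le_mul_of_nonneg_left
        (Real.rpow_le_rpow_of_nonpos hc (hcu.trans huv) (by linarith)) (by positivity)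
  linarith

theorem ContinuousOn.forall_pos_of_forall_pos_before {G : ℝ → ℝ} {a b : ℝ}
    (hG : ContinuousOn G (Ico a b)) (ha : 0 < G a)
    (hstep : ∀ t ∈ Ioo a b, (∀ s ∈ Ico a t, 0 < G s) → 0 < G t) :
    ∀ t ∈ Ico a b, 0 < G t := by
  by_contra! ⟨t₁, ht₁, hGt₁⟩
  set K := Icc a t₁ ∩ G ⁻¹' Iic 0
  have hK : IsClosed K :=
    (hG.mono (Icc_subset_Ico_right ht₁.2)).preimage_isClosed_of_isClosed isClosed_Icc isClosed_Iic
  have hKne : K.Nonempty := ⟨t₁, ⟨ht₁.1, le_rfl⟩, hGt₁⟩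
  have hKbdd : BddBelow K := ⟨a, fun _ hs => hs.1.1⟩
  obtain ⟨⟨hat₀, ht₀t₁⟩, hGt₀⟩ := hK.csInf_mem hKne hKbdd
  have hat₀' : a < sInf K := hat₀.lt_of_ne (by rintro h; rw [← h] at hGt₀; exact hGt₀.not_gt ha)
  refine (hstep _ ⟨hat₀', ht₀t₁.trans_lt ht₁.2⟩ fun s hs => ?_).not_ge hGt₀
  by_contra! hGs
  exact (csInf_le hKbdd ⟨⟨hs.1, hs.2.le.trans ht₀t₁⟩, hGs⟩).not_gt hs.2

theorem MonotoneOn.tendsto_atTop_nhdsLT_of_not_bddAbove {f : ℝ → ℝ} {a b : ℝ}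
    (hf : MonotoneOn f (Ioo a b)) (hbdd : ¬BddAbove (f '' Ioo a b)) :
    Tendsto f (𝓝[<] b) atTop := by
  rw [Filter.tendsto_atTop]
  intro M
  obtain ⟨_, ⟨t, ht, rfl⟩, hMt⟩ := not_bddAbove_iff.mp hbdd M
  filter_upwards [Ioo_mem_nhdsLT ht.2] with s hs
  exact hMt.le.trans (hf ht ⟨ht.1.trans hs.1, hs.2⟩ hs.1.le)

theorem hasDerivAt_ite_lt {y f y' : ℝ → ℝ} {a T d : ℝ} (ha : a < T)
    (hy : ∀ t ∈ Ioo a T, HasDerivAt y (y' t) t) (hy' : Tendsto y' (𝓝[<] T) (𝓝 d))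
    (hyf : Tendsto y (𝓝[<] T) (𝓝 (f T))) (hf : HasDerivWithinAt f d (Ici T) T) :
    HasDerivAt (fun t => if t < T then y t else f t) d T := by
  set z := fun t => if t < T then y t else f t
  have hzy : ∀ t ∈ Ioo a T, z =ᶠ[𝓝 t] y := fun t ht =>
    (eventually_lt_nhds ht.2).mono fun s hs => if_pos hs
  have hleft : HasDerivWithinAt z d (Iic T) T := by
    refine hasDerivWithinAt_Iic_of_tendsto_deriv (s := Ioo a T)
      (fun t ht =>
        ((hzy t ht).hasDerivAt_iff.mpr (hy t ht)).differentiableAt.differentiableWithinAt)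
      ?_ (Ioo_mem_nhdsLT ha) ?_
    · have : Tendsto z (𝓝[Ioo a T] T) (𝓝 (f T)) :=
        (hyf.mono_left (nhdsWithin_mono _ Ioo_subset_Iio_self)).congr'
          (eventually_nhdsWithin_of_forall fun t ht => (if_pos ht.2).symm)
      simpa [ContinuousWithinAt, z] using this
    · refine hy'.congr' ?_
      filter_upwards [Ioo_mem_nhdsLT ha] with t ht
      exact ((hzy t ht).hasDerivAt_iff.mpr (hy t ht)).deriv.symm
  have hright : HasDerivWithinAt z d (Ici T) T :=
    hf.congr (fun t ht => if_neg (not_lt.mpr ht)) (if_neg (lt_irrefl T))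
  simpa using hleft.union hright

theorem LocallyLipschitz.exists_hasDerivWithinAt_Icc_sub {E : Type*} [NormedAddCommGroup E]
    [NormedSpace ℝ E] [CompleteSpace E] {F : E → E} {g : ℝ → E} {T δ : ℝ}
    (hF : LocallyLipschitz F) (hδ : 0 < δ) (hg : ContinuousOn g (Icc T (T + δ))) (x₀ : E) :
    ∃ ε, 0 < ε ∧ ε ≤ δ ∧ ∃ f : ℝ → E, f T = x₀ ∧
      ∀ t ∈ Icc T (T + ε), HasDerivWithinAt f (F (f t) - g t) (Icc T (T + ε)) t := by
  obtain ⟨K, U, hU, hFU⟩ := hF x₀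
  obtain ⟨r, hr, hrU⟩ := Metric.mem_nhds_iff.mp hU
  have hball : closedBall x₀ (r / 2) ⊆ U :=
    (closedBall_subset_ball (half_lt_self hr)).trans hrU
  obtain ⟨B, hB⟩ := isCompact_Icc.exists_bound_of_continuousOn hg
  set M := ‖F x₀‖ + K * r + B
  have hFM : ∀ t ∈ Icc T (T + δ), ∀ x ∈ closedBall x₀ (r / 2), ‖F x - g t‖ ≤ M := by
    intro t ht x hx
    have hFx : ‖F x - F x₀‖ ≤ K * r := by
      refine (hFU.norm_sub_le (hball hx) (hball (mem_closedBall_self (by positivity)))).trans ?_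
      gcongr
      exact (mem_closedBall_iff_norm.mp hx).trans (half_le_self hr.le)
    calc ‖F x - g t‖ ≤ ‖F x - F x₀‖ + ‖F x₀‖ + ‖g t‖ := by
          refine (norm_sub_le _ _).trans ?_
          gcongr
          exact norm_le_norm_sub_add _ _
      _ ≤ M := by linarith [hB t ht]
  have hM : 0 ≤ M := (norm_nonneg _).trans
    (hFM T ⟨le_rfl, by linarith⟩ x₀ (mem_closedBall_self (by positivity)))
  set ε := min δ (r / 2 / (M + 1))
  have hε : 0 < ε := lt_min hδ (by positivity)
  have hεδ : ε ≤ δ := min_le_left _ _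
  have hIcc : Icc T (T + ε) ⊆ Icc T (T + δ) := Icc_subset_Icc_right (by linarith)
  have hPL : IsPicardLindelof (fun t x => F x - g t) (tmin := T) (tmax := T + ε)
      ⟨T, le_rfl, by linarith⟩ x₀ ⟨r / 2, by positivity⟩ 0 ⟨M, hM⟩ K := by
    refine ⟨fun t _ => ?_, fun x _ => ?_, fun t ht x hx => hFM t (hIcc ht) x hx, ?_⟩
    · intro x hx x' hx'
      simpa only [edist_sub_right] using hFU (hball hx) (hball hx')
    · exact continuousOn_const.sub (hg.mono hIcc)
    · simp only [NNReal.coe_zero, sub_zero, add_sub_cancel_left, sub_self]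
      rw [max_eq_left hε.le]
      calc M * ε ≤ M * (r / 2 / (M + 1)) := by gcongr; exact min_le_right _ _
        _ ≤ r / 2 := by
          rw [mul_div_assoc', div_le_iff₀ (by positivity)]
          nlinarith
  obtain ⟨f, hfT, hf⟩ := hPL.exists_eq_forall_mem_Icc_hasDerivWithinAt₀
  exact ⟨ε, hε, hεδ, f, hfT, hf⟩

theorem le_add_of_mul_rpow_le_deriv {y y' : ℝ → ℝ} {a b ε p : ℝ} (hab : a < b) (hp : 1 < p)
    (hε : 0 < ε) (hy : ∀ t ∈ Ico a b, HasDerivAt y (y' t) t) (hpos : ∀ t ∈ Ico a b, 0 < y t)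
    (hy' : ∀ t ∈ Ico a b, ε * y t ^ p ≤ y' t) :
    b ≤ a + y a ^ (1 - p) / ((p - 1) * ε) := by
  set k := (p - 1) * ε
  have hk : 0 < k := mul_pos (by linarith) hε
  by_contra! hb
  set t := a + y a ^ (1 - p) / k
  have ht : a < t :=
    lt_add_of_pos_right a (div_pos (Real.rpow_pos_of_pos (hpos a ⟨le_rfl, hab⟩) _) hk)
  have hsub : Icc a t ⊆ Ico a b := Icc_subset_Ico_right hb
  -- `x ^ (1 - p) + k t` is constant along solutions of `x' = ε x ^ p`
  have hu : ∀ s ∈ Ico a b, HasDerivAt (fun s => y s ^ (1 - p) + k * s)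
      (y' s * (1 - p) * y s ^ (1 - p - 1) + k) s := fun s hs =>
    ((hy s hs).rpow_const (Or.inl (hpos s hs).ne')).add ((hasDerivAt_id s).const_mul k)
      |>.congr_deriv (by ring)
  have hanti : AntitoneOn (fun s => y s ^ (1 - p) + k * s) (Icc a t) := by
    refine antitoneOn_of_hasDerivWithinAt_nonpos (convex_Icc a t)
      (fun s hs => (hu s (hsub hs)).continuousAt.continuousWithinAt)
      (fun s hs => (hu s (hsub (interior_subset hs))).hasDerivWithinAt) fun s hs => ?_
    have hs := hsub (interior_subset hs)
    have hys := hpos s hs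
    have hinv : y s ^ (1 - p - 1) * y s ^ p = 1 := by
      rw [← Real.rpow_add hys]; simp
    have : ε ≤ y s ^ (1 - p - 1) * y' s := by
      calc ε = y s ^ (1 - p - 1) * (ε * y s ^ p) := by rw [mul_left_comm, hinv, mul_one]
        _ ≤ y s ^ (1 - p - 1) * y' s := by gcongr; exact hy' s hs
    nlinarith
  have := hanti (left_mem_Icc.mpr ht.le) (right_mem_Icc.mpr ht.le) ht.le
  have hyt := Real.rpow_pos_of_pos (hpos t (hsub (right_mem_Icc.mpr ht.le))) (1 - p)
  simp only [t] at this hyt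
  rw [mul_add, mul_div_cancel₀ _ hk.ne'] at this
  linarith

namespace DelaySolOn

variable {τ p q : ℝ} {φ y : ℝ → ℝ} {b : ℝ}

theorem continuousOn_abs_rpow {r : ℝ} (hr : 0 ≤ r) (hy : DelaySolOn τ p q φ y b) :
    ContinuousOn (fun t => |y t| ^ r) (Ico (-τ) b) :=
  hy.1.abs.rpow_const fun _ _ => Or.inr hr

theorem continuousOn_abs_rpow_delay (hq : 0 ≤ q) (hy : DelaySolOn τ p q φ y b) :
    ContinuousOn (fun t => |y (t - τ)| ^ q) (Ico 0 (b + τ)) := by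
  have hshift : MapsTo (· - τ) (Ico 0 (b + τ)) (Ico (-τ) b) := fun t ht =>
    ⟨by linarith [ht.1], by linarith [ht.2]⟩
  exact (continuousOn_abs_rpow hq hy).comp (continuousOn_id.sub continuousOn_const) hshift

theorem strictMonoOn_of_forall_pos (hτ : 0 ≤ τ) (hy : DelaySolOn τ p q φ y b) {D : Set ℝ}
    (hD : Convex ℝ D) (hDb : D ⊆ Ico 0 b)
    (hpos : ∀ t ∈ interior D, 0 < |y t| ^ p - |y (t - τ)| ^ q) : StrictMonoOn y D := by
  have hint : interior D ⊆ Ioo 0 b := by simpa using interior_mono hDb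
  exact strictMonoOn_of_hasDerivWithinAt_pos hD
    (hy.1.mono (hDb.trans (Ico_subset_Ico_left (by linarith))))
    (fun t ht => (hy.2.2 t (hint ht)).hasDerivWithinAt) hpos

theorem abs_rpow_delay_lt_of_strictMonoOn (hτ : 0 < τ) (hp : 0 < p) (hqp : q ≤ p)
    (hφ0 : 1 ≤ φ 0) (hφ : ∀ t ∈ Icc (-τ) (0:ℝ), |φ t| ^ (q / p) ≤ φ 0)
    (hy : DelaySolOn τ p q φ y b) {t : ℝ} (ht : 0 < t) (hmono : StrictMonoOn y (Icc 0 t)) :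
    |y (t - τ)| ^ q < |y t| ^ p := by
  have hy0 : y 0 = φ 0 := hy.2.1 0 ⟨by linarith, le_rfl⟩
  have hyt : φ 0 < y t := hy0 ▸ hmono (left_mem_Icc.2 ht.le) (right_mem_Icc.2 ht.le) ht
  rw [abs_of_pos (by linarith : 0 < y t)]
  rcases le_or_gt t τ with htτ | htτ
  · have hmem : t - τ ∈ Icc (-τ) 0 := ⟨by linarith, by linarith⟩
    calc |y (t - τ)| ^ q = (|φ (t - τ)| ^ (q / p)) ^ p := by
          rw [hy.2.1 _ hmem, Real.rpow_div_rpow_self (abs_nonneg _) hp.ne']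
      _ ≤ φ 0 ^ p := Real.rpow_le_rpow (by positivity) (hφ _ hmem) hp.le
      _ < y t ^ p := Real.rpow_lt_rpow (by linarith) hyt hp
  · have hmem : t - τ ∈ Icc 0 t := ⟨by linarith, by linarith⟩
    have h1 : y 0 < y (t - τ) := hmono (left_mem_Icc.2 ht.le) hmem (by linarith)
    have h2 : y (t - τ) < y t := hmono hmem (right_mem_Icc.2 ht.le) (by linarith)
    calc |y (t - τ)| ^ q = y (t - τ) ^ q := by rw [abs_of_pos (by linarith)]
      _ ≤ y (t - τ) ^ p := Real.rpow_le_rpow_of_exponent_le (by linarith) hqp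
      _ < y t ^ p := Real.rpow_lt_rpow (by linarith) h2 hp

theorem forcing_pos (hτ : 0 < τ) (hq : 0 ≤ q) (hp : 0 < p) (hqp : q ≤ p)
    (hφ0 : 1 ≤ φ 0) (hφ : ∀ t ∈ Icc (-τ) (0:ℝ), |φ t| ^ (q / p) ≤ φ 0)
    (hφτ : |φ (-τ)| ^ (q / p) < φ 0) (hy : DelaySolOn τ p q φ y b) :
    ∀ t ∈ Ico 0 b, 0 < |y t| ^ p - |y (t - τ)| ^ q := by
  have hG : ContinuousOn (fun t => |y t| ^ p - |y (t - τ)| ^ q) (Ico 0 b) :=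
    ((continuousOn_abs_rpow hp.le hy).mono (Ico_subset_Ico_left (by linarith))).sub
      ((continuousOn_abs_rpow_delay hq hy).mono (Ico_subset_Ico_right (by linarith)))
  refine hG.forall_pos_of_forall_pos_before ?_ fun t ht hpos => sub_pos.2 ?_
  · rw [zero_sub, hy.2.1 0 ⟨by linarith, le_rfl⟩, hy.2.1 (-τ) ⟨le_rfl, by linarith⟩, sub_pos,
      abs_of_pos (by linarith : 0 < φ 0), ← Real.rpow_div_rpow_self (abs_nonneg (φ (-τ))) hp.ne']
    exact Real.rpow_lt_rpow (by positivity) hφτ hp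
  · refine abs_rpow_delay_lt_of_strictMonoOn hτ hp hqp hφ0 hφ hy ht.1 ?_
    refine strictMonoOn_of_forall_pos hτ.le hy (convex_Icc 0 t)
      (Icc_subset_Ico_right ht.2) fun s hs => hpos s ?_
    rw [interior_Icc] at hs
    exact Ioo_subset_Ico_self hs

theorem strictMonoOn (hτ : 0 < τ) (hq : 0 ≤ q) (hp : 0 < p) (hqp : q ≤ p)
    (hφ0 : 1 ≤ φ 0) (hφ : ∀ t ∈ Icc (-τ) (0:ℝ), |φ t| ^ (q / p) ≤ φ 0)
    (hφτ : |φ (-τ)| ^ (q / p) < φ 0) (hy : DelaySolOn τ p q φ y b) :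
    StrictMonoOn y (Ico 0 b) :=
  strictMonoOn_of_forall_pos hτ.le hy (convex_Ico 0 b) subset_rfl fun t ht =>
    forcing_pos hτ hq hp hqp hφ0 hφ hφτ hy t (interior_subset ht)

theorem exists_extension (hτ : 0 < τ) (hp : 1 < p) (hq : 0 ≤ q) (hb : 0 < b)
    (hy : DelaySolOn τ p q φ y b) {L : ℝ} (hL : Tendsto y (𝓝[<] b) (𝓝 L)) :
    ∃ b', b < b' ∧ ∃ z : ℝ → ℝ, DelaySolOn τ p q φ z b' ∧ ∀ t ∈ Ico (-τ) b, z t = y t := by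
  set g := fun t => |y (t - τ)| ^ q
  have hg : ContinuousOn g (Ico 0 (b + τ)) := continuousOn_abs_rpow_delay hq hy
  have hF : LocallyLipschitz fun x : ℝ => |x| ^ p := (contDiff_norm_rpow hp).locallyLipschitz
  obtain ⟨ε, hε, hετ, f, hfb, hf⟩ := hF.exists_hasDerivWithinAt_Icc_sub (half_pos hτ)
    (hg.mono (Icc_subset_Ico (by linarith) (by linarith))) L
  set z := fun t => if t < b then y t else f t
  have hzy : ∀ t < b, z =ᶠ[𝓝 t] y := fun t ht =>
    (eventually_lt_nhds ht).mono fun s hs => if_pos hs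
  have hzf : ∀ t, b ≤ t → z t = f t := fun t ht => if_neg (not_lt.2 ht)
  have hdelay : ∀ t < b + ε, z (t - τ) = y (t - τ) := fun t ht => if_pos (by linarith)
  have hz' : ∀ t ∈ Ioo 0 (b + ε), HasDerivAt z (|z t| ^ p - |z (t - τ)| ^ q) t := by
    intro t ht
    rw [hdelay t ht.2]
    rcases lt_trichotomy t b with htb | rfl | htb
    · rw [(hzy t htb).eq_of_nhds]
      exact (hzy t htb).hasDerivAt_iff.mpr (hy.2.2 t ⟨ht.1, htb⟩)
    · rw [hzf t le_rfl, hfb]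
      have hgt : ContinuousAt g t := hg.continuousAt (Ico_mem_nhds ht.1 (by linarith))
      refine hasDerivAt_ite_lt ht.1 hy.2.2
        (((hF.continuous.tendsto L).comp hL).sub (hgt.tendsto.mono_left nhdsWithin_le_nhds))
        (hfb ▸ hL) ?_
      have := (hf t (left_mem_Icc.2 (by linarith))).mono_of_mem_nhdsWithin
        (Icc_mem_nhdsGE (by linarith))
      rwa [hfb] at this
    · rw [hzf t htb.le]
      refine HasDerivAt.congr_of_eventuallyEq ?_
        ((eventually_gt_nhds htb).mono fun s hs => hzf s hs.le)
      exact (hf t ⟨htb.le, ht.2.le⟩).hasDerivAt (Icc_mem_nhds htb ht.2)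
  have hcont : ContinuousOn z (Ico (-τ) (b + ε)) := by
    intro t ht
    rcases lt_or_ge t b with htb | htb
    · have hnhds : Ico (-τ) b ∈ 𝓝[Ico (-τ) (b + ε)] t :=
        mem_nhdsWithin.2 ⟨Iio b, isOpen_Iio, htb, fun s hs => ⟨hs.2.1, hs.1⟩⟩
      exact ((hy.1 t ⟨ht.1, htb⟩).mono_of_mem_nhdsWithin hnhds).congr_of_eventuallyEq
        (eventually_nhdsWithin_of_eventually_nhds (hzy t htb)) (hzy t htb).eq_of_nhds
    · exact (hz' t ⟨by linarith, ht.2⟩).continuousAt.continuousWithinAt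
  refine ⟨b + ε, by linarith, z, ⟨hcont, fun t ht => ?_, hz'⟩, fun t ht => (hzy t ht.2).eq_of_nhds⟩
  rw [← hy.2.1 t ht]
  exact (hzy t (by linarith [ht.2])).eq_of_nhds

theorem tendsto_atTop_of_not_extendable (hτ : 0 < τ) (hq : 0 ≤ q) (hp : 1 < p) (hqp : q ≤ p)
    (hφ0 : 1 ≤ φ 0) (hφ : ∀ t ∈ Icc (-τ) (0:ℝ), |φ t| ^ (q / p) ≤ φ 0)
    (hφτ : |φ (-τ)| ^ (q / p) < φ 0) (hb : 0 < b) (hy : DelaySolOn τ p q φ y b)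
    (hmax : ¬ ∃ b', b < b' ∧ ∃ z : ℝ → ℝ, DelaySolOn τ p q φ z b' ∧
      ∀ t ∈ Ico (-τ) b, z t = y t) :
    Tendsto y (𝓝[<] b) atTop := by
  have hmono : MonotoneOn y (Ioo 0 b) :=
    (hy.strictMonoOn hτ hq (by linarith) hqp hφ0 hφ hφτ).monotoneOn.mono Ioo_subset_Ico_self
  by_cases hbdd : BddAbove (y '' Ioo 0 b)
  · exact absurd (hy.exists_extension hτ hp hq hb
      (hmono.tendsto_nhdsWithin_Ioo_left (nonempty_Ioo.2 hb) hbdd)) hmax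
  · exact hmono.tendsto_atTop_nhdsLT_of_not_bddAbove hbdd

end DelaySolOn

theorem DelaySolGlobal.delaySolOn {τ p q : ℝ} {φ y : ℝ → ℝ} (hy : DelaySolGlobal τ p q φ y)
    (b : ℝ) : DelaySolOn τ p q φ y b :=
  ⟨hy.1.mono Ico_subset_Ici_self, hy.2.1, fun t ht => hy.2.2 t ht.1⟩

theorem not_exists_delaySolGlobal {τ p q : ℝ} {φ : ℝ → ℝ} (hτ : 0 < τ) (hq : 0 ≤ q)
    (hqp : q < p) (hp : 1 < p) (hφ0 : 1 ≤ φ 0)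
    (hφ : ∀ t ∈ Icc (-τ) (0:ℝ), |φ t| ^ (q / p) ≤ φ 0) (hφτ : |φ (-τ)| ^ (q / p) < φ 0) :
    ¬ ∃ y, DelaySolGlobal τ p q φ y := by
  rintro ⟨y, hy⟩
  have hmono : StrictMonoOn y (Ici 0) := fun s hs t ht hst =>
    (hy.delaySolOn (t + 1)).strictMonoOn hτ hq (by linarith) hqp.le hφ0 hφ hφτ
      ⟨hs, by linarith [hst]⟩ ⟨ht, by linarith⟩ hst
  set c := y τ
  have hc : 1 < c := hφ0.trans_lt
    (hy.2.1 0 ⟨by linarith, le_rfl⟩ ▸ hmono (mem_Ici.2 le_rfl) (mem_Ici.2 hτ.le) hτ)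
  have hyc : ∀ t, τ ≤ t → c ≤ y t := fun t ht =>
    hmono.monotoneOn (mem_Ici.2 hτ.le) (mem_Ici.2 (hτ.le.trans ht)) ht
  set ε := 1 - c ^ (q - p)
  have hε : 0 < ε := sub_pos.2 (Real.rpow_lt_one_of_one_lt_of_neg hc (by linarith))
  have hforcing : ∀ t, 2 * τ ≤ t → ε * y t ^ p ≤ |y t| ^ p - |y (t - τ)| ^ q := fun t ht => by
    have hcyt : c ≤ y (t - τ) := hyc _ (by linarith)
    have hyt : y (t - τ) ≤ y t :=
      hmono.monotoneOn (mem_Ici.2 (by linarith)) (mem_Ici.2 (by linarith)) (by linarith)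
    rw [abs_of_pos (by linarith), abs_of_pos (by linarith)]
    exact mul_rpow_le_rpow_sub_rpow (by linarith) hcyt hyt hq hqp.le
  set C := y (2 * τ) ^ (1 - p) / ((p - 1) * ε)
  set b := max (2 * τ + 1) (2 * τ + C + 1)
  have hb : 2 * τ < b := by linarith [le_max_left (2 * τ + 1) (2 * τ + C + 1)]
  have := le_add_of_mul_rpow_le_deriv (y := y) hb hp hε
    (fun t ht => hy.2.2 t (mem_Ioi.2 (by linarith [ht.1])))
    (fun t ht => zero_lt_one.trans (hc.trans_le (hyc t (by linarith [ht.1]))))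
    fun t ht => hforcing t ht.1
  linarith [le_max_right (2 * τ + 1) (2 * τ + C + 1)]

theorem delay_eq_blowup_general (τ p q : ℝ) (hτ : 0 < τ) (hq : 0 < q)
    (hp : max q 1 < p)
    (φ : ℝ → ℝ)
    (hφ0 : 1 ≤ φ 0)
    (hφ : ∀ t ∈ Set.Icc (-τ) (0:ℝ), |φ t| ^ (q / p) ≤ φ 0)
    (hφτ : |φ (-τ)| ^ (q / p) < φ 0) :
    (¬ ∃ y : ℝ → ℝ, DelaySolGlobal τ p q φ y) ∧
    ∀ (Tstar : ℝ) (y : ℝ → ℝ), 0 < Tstar →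
      DelaySolOn τ p q φ y Tstar →
      (¬ ∃ b : ℝ, Tstar < b ∧ ∃ z : ℝ → ℝ, DelaySolOn τ p q φ z b ∧
          ∀ t ∈ Set.Ico (-τ) Tstar, z t = y t) →
      Filter.Tendsto y (nhdsWithin Tstar (Set.Iio Tstar)) Filter.atTop := by
  obtain ⟨hqp, hp1⟩ := max_lt_iff.mp hp
  exact ⟨not_exists_delaySolGlobal hτ hq.le hqp hp1 hφ0 hφ hφτ, fun _ _ hT hy hmax =>
    hy.tendsto_atTop_of_not_extendable hτ hq.le hp1 hqp.le hφ0 hφ hφτ hT hmax⟩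

/-- let `τ > 0`, `q > 0`, `p > max(q,1)`, and let `φ` be a
continuous history with `φ(0) ≥ 1`, `φ(0) ≥ |φ(t)|^{q/p}` on `[−τ, 0]` and
`φ(0) > |φ(−τ)|^{q/p}`. Then any solution of
`y′(t) = |y(t)|^p − |y(t−τ)|^q` with history `φ` blows up in finite time:
there is no global solution, and on the maximal interval of existence
`[0, T*)` one has `T* < ∞` and `y(t) → +∞` as `t → T*⁻`. -/
theorem delay_eq_blowup (τ p q : ℝ) (hτ : 0 < τ) (hq : 0 < q)
    (hp : max q 1 < p)
    (φ : ℝ → ℝ) (hφcont : ContinuousOn φ (Set.Icc (-τ) 0))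
    (hφ0 : 1 ≤ φ 0)
    (hφ : ∀ t ∈ Set.Icc (-τ) (0:ℝ), |φ t| ^ (q / p) ≤ φ 0)
    (hφτ : |φ (-τ)| ^ (q / p) < φ 0) :
    (¬ ∃ y : ℝ → ℝ, DelaySolGlobal τ p q φ y) ∧
    ∀ (Tstar : ℝ) (y : ℝ → ℝ), 0 < Tstar →
      DelaySolOn τ p q φ y Tstar →
      (¬ ∃ b : ℝ, Tstar < b ∧ ∃ z : ℝ → ℝ, DelaySolOn τ p q φ z b ∧
          ∀ t ∈ Set.Ico (-τ) Tstar, z t = y t) →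
      Filter.Tendsto y (nhdsWithin Tstar (Set.Iio Tstar)) Filter.atTop :=
  delay_eq_blowup_general τ p q hτ hq hp φ hφ0 hφ hφτ
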